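/- Faithfulness of the maximum causal effect: for a quantum channel N from a d_A-dimensional system A to a d_B-dimensional system B, one has CE_max(N) = 0 if and only if N is a discard-and-reprepare channel, i.e., if and only if there exists a density matrix σ₀ on B such that N(X) = Tr[X]·σ₀ for every d_A×d_A complex matrix X. -/

import Mathlib

open Matrix ComplexOrder

/-- Trace norm of a square complex matrix. -/
noncomputable def traceNorm {n : Type*} [Fintype n] [DecidableEq n]
    (X : Matrix n n ℂ) : ℝ :=
  (((Matrix.posSemidef_conjTranspose_mul_self X).1.eigenvectorUnitary.1 *
      diagonal (((↑) : ℝ → ℂ) ∘ (Real.sqrt ·) ∘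
        (Matrix.posSemidef_conjTranspose_mul_self X).1.eigenvalues) *
      (star (Matrix.posSemidef_conjTranspose_mul_self X).1.eigenvectorUnitary :
        Matrix n n ℂ)).trace).re

/-- A density matrix: positive semidefinite with unit trace. -/
def IsDensityMatrix {n : Type*} [Fintype n] [DecidableEq n] (ρ : Matrix n n ℂ) : Prop :=
  ρ.PosSemidef ∧ ρ.trace = 1

/-- A quantum channel: a linear map admitting a Kraus representation. -/
def IsQuantumChannel {dA dB : ℕ}
    (N : Matrix (Fin dA) (Fin dA) ℂ →ₗ[ℂ] Matrix (Fin dB) (Fin dB) ℂ) : Prop :=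
  ∃ (k : ℕ) (K : Fin k → Matrix (Fin dB) (Fin dA) ℂ),
    (∀ X, N X = ∑ i, K i * X * (K i)ᴴ) ∧ (∑ i, (K i)ᴴ * K i = 1)

/-- Maximum causal effect. -/
noncomputable def CEmax {dA dB : ℕ}
    (N : Matrix (Fin dA) (Fin dA) ℂ →ₗ[ℂ] Matrix (Fin dB) (Fin dB) ℂ) : ℝ :=
  sSup {x : ℝ | ∃ ρ ρ' : Matrix (Fin dA) (Fin dA) ℂ,
    IsDensityMatrix ρ ∧ IsDensityMatrix ρ' ∧ ρ ≠ ρ' ∧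
    x = traceNorm (N ρ - N ρ') / traceNorm (ρ - ρ')}

/-- Minimum causal effect. -/
noncomputable def CEmin {dA dB : ℕ}
    (N : Matrix (Fin dA) (Fin dA) ℂ →ₗ[ℂ] Matrix (Fin dB) (Fin dB) ℂ) : ℝ :=
  sInf {x : ℝ | ∃ ρ ρ' : Matrix (Fin dA) (Fin dA) ℂ,
    IsDensityMatrix ρ ∧ IsDensityMatrix ρ' ∧ ρ ≠ ρ' ∧
    x = traceNorm (N ρ - N ρ') / traceNorm (ρ - ρ')}

/-- Minimum distinguishability preservation. -/
noncomputable def DPmin {dA dB : ℕ}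
    (N : Matrix (Fin dA) (Fin dA) ℂ →ₗ[ℂ] Matrix (Fin dB) (Fin dB) ℂ) : ℝ :=
  sInf {x : ℝ | ∃ p : ℝ, 0 ≤ p ∧ p ≤ 1 ∧
    ∃ ρ ρ' : Matrix (Fin dA) (Fin dA) ℂ,
      IsDensityMatrix ρ ∧ IsDensityMatrix ρ' ∧ ρ ≠ ρ' ∧
      x = traceNorm ((p : ℂ) • N ρ - ((1 - p : ℝ) : ℂ) • N ρ') /
          traceNorm ((p : ℂ) • ρ - ((1 - p : ℝ) : ℂ) • ρ')}

/-!
If `CEmax N = 0` then `N` is constant on states: the ratio set is bounded (comparing the trace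
norm with the Frobenius norm, for which every linear map is bounded), so its `sSup` is a genuine
supremum, each ratio is at most `0`, and the trace norm is faithful. A linear map that is
constant, say `σ₀`, on states sends every positive semidefinite `P` to `Tr P • σ₀` by rescaling
`P` to a state; since positive semidefinite matrices span all matrices (real and imaginary
parts, then positive and negative parts), `N X = Tr X • σ₀` for all `X`. Taking `σ₀` the image
of the maximally mixed state makes it a state.
-/

section TraceNorm

variable {n : Type*} [Fintype n] [DecidableEq n]

lemma traceNorm_eq_sum_sqrt_eigenvalues (X : Matrix n n ℂ) :
    traceNorm X = ∑ i, √((posSemidef_conjTranspose_mul_self X).1.eigenvalues i) := by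
  rw [traceNorm, trace_mul_cycle, (posSemidef_conjTranspose_mul_self X).1.eigenvectorUnitary.2.1,
    one_mul, trace_diagonal]
  simp

lemma traceNorm_nonneg (X : Matrix n n ℂ) : 0 ≤ traceNorm X := by
  rw [traceNorm_eq_sum_sqrt_eigenvalues]
  positivity

section Frobenius

attribute [local instance] frobeniusNormedAddCommGroup frobeniusNormedSpace

lemma frobenius_norm_sq_eq_sum_eigenvalues (X : Matrix n n ℂ) :
    ‖X‖ ^ 2 = ∑ i, (posSemidef_conjTranspose_mul_self X).1.eigenvalues i := by
  have h_trace : ((Xᴴ * X).trace).re = ∑ i, ∑ j, ‖X i j‖ ^ 2 := by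
    simp only [trace, diag_apply, mul_apply, conjTranspose_apply, Complex.re_sum,
      Complex.star_def, ← Complex.normSq_eq_norm_sq, Complex.normSq_apply, Complex.mul_re,
      Complex.conj_re, Complex.conj_im]
    rw [Finset.sum_comm]
    simp
  rw [frobenius_norm_def, ← Real.rpow_natCast, ← Real.rpow_mul (by positivity)]
  norm_num
  rw [← h_trace, (posSemidef_conjTranspose_mul_self X).1.trace_eq_sum_eigenvalues]
  simp

lemma frobenius_norm_le_traceNorm (X : Matrix n n ℂ) : ‖X‖ ≤ traceNorm X := by
  have hev := (posSemidef_conjTranspose_mul_self X).eigenvalues_nonneg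
  refine (pow_le_pow_iff_left₀ (norm_nonneg X) (traceNorm_nonneg X) two_ne_zero).1 ?_
  rw [frobenius_norm_sq_eq_sum_eigenvalues, traceNorm_eq_sum_sqrt_eigenvalues]
  calc ∑ i, _ = ∑ i, √(_ : ℝ) ^ 2 := by simp [Real.sq_sqrt, hev]
    _ ≤ _ := Finset.sum_sq_le_sq_sum_of_nonneg fun i _ ↦ Real.sqrt_nonneg _

lemma traceNorm_le_sqrt_card_mul_frobenius_norm (X : Matrix n n ℂ) :
    traceNorm X ≤ √(Fintype.card n) * ‖X‖ := by
  have hev := (posSemidef_conjTranspose_mul_self X).eigenvalues_nonneg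
  refine (pow_le_pow_iff_left₀ (traceNorm_nonneg X) (by positivity) two_ne_zero).1 ?_
  rw [mul_pow, Real.sq_sqrt (Nat.cast_nonneg _), frobenius_norm_sq_eq_sum_eigenvalues,
    traceNorm_eq_sum_sqrt_eigenvalues]
  calc _ ≤ (Fintype.card n : ℝ) * ∑ i, √(_ : ℝ) ^ 2 := sq_sum_le_card_mul_sum_sq
    _ = _ := by simp [Real.sq_sqrt, hev]

lemma traceNorm_eq_zero_iff {X : Matrix n n ℂ} : traceNorm X = 0 ↔ X = 0 := by
  refine ⟨fun h ↦ norm_eq_zero.1 (le_antisymm (h ▸ frobenius_norm_le_traceNorm X) (norm_nonneg X)),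
    fun h ↦ le_antisymm ?_ (traceNorm_nonneg X)⟩
  simpa [h] using traceNorm_le_sqrt_card_mul_frobenius_norm X

lemma traceNorm_pos {X : Matrix n n ℂ} : 0 < traceNorm X ↔ X ≠ 0 := by
  rw [(traceNorm_nonneg X).lt_iff_ne', Ne, traceNorm_eq_zero_iff]

lemma exists_traceNorm_map_le {m : Type*} [Fintype m] [DecidableEq m]
    (f : Matrix n n ℂ →ₗ[ℂ] Matrix m m ℂ) :
    ∃ C, ∀ X, traceNorm (f X) ≤ C * traceNorm X := by
  obtain ⟨C, hC, hf⟩ := SemilinearMapClass.bound_of_continuous f f.continuous_of_finiteDimensional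
  refine ⟨√(Fintype.card m) * C, fun X ↦ ?_⟩
  calc traceNorm (f X) ≤ √(Fintype.card m) * ‖f X‖ := traceNorm_le_sqrt_card_mul_frobenius_norm _
    _ ≤ √(Fintype.card m) * (C * traceNorm X) := by
      gcongr
      exact (hf X).trans (by gcongr; exact frobenius_norm_le_traceNorm X)
    _ = _ := by ring

end Frobenius

end TraceNorm

lemma isDensityMatrix_inv_trace_smul {n : Type*} [Fintype n] [DecidableEq n]
    {P : Matrix n n ℂ} (hP : P.PosSemidef) (h : P.trace ≠ 0) :
    IsDensityMatrix (P.trace⁻¹ • P) :=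
  ⟨hP.smul (inv_nonneg_of_nonneg hP.trace_nonneg),
    by rw [trace_smul, smul_eq_mul, inv_mul_cancel₀ h]⟩

namespace IsQuantumChannel

variable {dA dB : ℕ} {N : Matrix (Fin dA) (Fin dA) ℂ →ₗ[ℂ] Matrix (Fin dB) (Fin dB) ℂ}

lemma trace_map (hN : IsQuantumChannel N) (X : Matrix (Fin dA) (Fin dA) ℂ) :
    (N X).trace = X.trace := by
  obtain ⟨k, K, hK, hsum⟩ := hN
  simp_rw [hK, trace_sum, fun i ↦ trace_mul_cycle (K i) X (K i)ᴴ, ← trace_sum, ← Finset.sum_mul,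
    hsum, one_mul]

lemma posSemidef_map (hN : IsQuantumChannel N) {X : Matrix (Fin dA) (Fin dA) ℂ}
    (hX : X.PosSemidef) : (N X).PosSemidef := by
  obtain ⟨k, K, hK, -⟩ := hN
  rw [hK]
  exact Finset.sum_induction _ PosSemidef (fun _ _ ↦ .add) .zero
    fun i _ ↦ hX.mul_mul_conjTranspose_same (K i)

lemma isDensityMatrix_map (hN : IsQuantumChannel N) {ρ : Matrix (Fin dA) (Fin dA) ℂ}
    (hρ : IsDensityMatrix ρ) : IsDensityMatrix (N ρ) :=
  ⟨hN.posSemidef_map hρ.1, (hN.trace_map ρ).trans hρ.2⟩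

end IsQuantumChannel

namespace LinearMap

open scoped MatrixOrder

variable {n M : Type*} [Fintype n] [DecidableEq n] [AddCommGroup M] [Module ℂ M]

lemma map_posSemidef_eq_trace_smul_of_forall_isDensityMatrix (f : Matrix n n ℂ →ₗ[ℂ] M)
    {σ : M} (hf : ∀ ρ, IsDensityMatrix ρ → f ρ = σ) {P : Matrix n n ℂ} (hP : P.PosSemidef) :
    f P = P.trace • σ := by
  by_cases h : P.trace = 0
  · simp [hP.trace_eq_zero_iff.1 h]
  · rw [← hf _ (isDensityMatrix_inv_trace_smul hP h), map_smul, smul_smul, mul_inv_cancel₀ h,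
      one_smul]

lemma eq_trace_smul_of_forall_isDensityMatrix (f : Matrix n n ℂ →ₗ[ℂ] M)
    {σ : M} (hf : ∀ ρ, IsDensityMatrix ρ → f ρ = σ) (X : Matrix n n ℂ) :
    f X = X.trace • σ := by
  have : f = (traceLinearMap n ℂ ℂ).smulRight σ :=
    ext_on CStarAlgebra.span_nonneg fun P hP ↦
      map_posSemidef_eq_trace_smul_of_forall_isDensityMatrix f hf hP.posSemidef
  simp [this]

end LinearMap

lemma CEmax_eq_zero_iff {dA dB : ℕ}
    (N : Matrix (Fin dA) (Fin dA) ℂ →ₗ[ℂ] Matrix (Fin dB) (Fin dB) ℂ) :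
    CEmax N = 0 ↔ ∀ ρ ρ', IsDensityMatrix ρ → IsDensityMatrix ρ' → N ρ = N ρ' := by
  constructor
  · intro h ρ ρ' hρ hρ'
    by_contra hNρ
    have hρρ' : ρ ≠ ρ' := fun h ↦ hNρ (congrArg N h)
    obtain ⟨C, hC⟩ := exists_traceNorm_map_le N
    have hle : traceNorm (N ρ - N ρ') / traceNorm (ρ - ρ') ≤ CEmax N := by
      refine le_csSup ⟨C, ?_⟩ ⟨ρ, ρ', hρ, hρ', hρρ', rfl⟩
      rintro _ ⟨ρ, ρ', -, -, hρρ', rfl⟩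
      rw [div_le_iff₀ (traceNorm_pos.2 (sub_ne_zero.2 hρρ')), ← map_sub]
      exact hC _
    exact (h ▸ hle).not_gt
      (div_pos (traceNorm_pos.2 (sub_ne_zero.2 hNρ)) (traceNorm_pos.2 (sub_ne_zero.2 hρρ')))
  · intro h
    refine le_antisymm (Real.sSup_nonpos ?_) (Real.sSup_nonneg ?_)
    · rintro _ ⟨ρ, ρ', hρ, hρ', -, rfl⟩
      simp [h ρ ρ' hρ hρ', traceNorm_eq_zero_iff.2 rfl]
    · rintro _ ⟨ρ, ρ', -, -, -, rfl⟩
      exact div_nonneg (traceNorm_nonneg _) (traceNorm_nonneg _)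

/-- **Faithfulness of the maximum causal effect.**
For a quantum channel `N` from a `dA`-dimensional system (`dA > 0`) to a `dB`-dimensional
system, `CEmax N = 0` if and only if `N` is a discard-and-reprepare channel, i.e. there is a
density matrix `σ₀` on `B` with `N X = Tr[X] • σ₀` for every matrix `X`. -/
theorem CEmax_eq_zero_iff_discard_and_reprepare {dA dB : ℕ} (hdA : 0 < dA)
    (N : Matrix (Fin dA) (Fin dA) ℂ →ₗ[ℂ] Matrix (Fin dB) (Fin dB) ℂ)
    (hN : IsQuantumChannel N) :
    CEmax N = 0 ↔
      ∃ σ₀ : Matrix (Fin dB) (Fin dB) ℂ, IsDensityMatrix σ₀ ∧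
        ∀ X : Matrix (Fin dA) (Fin dA) ℂ, N X = X.trace • σ₀ := by
  rw [CEmax_eq_zero_iff]
  constructor
  · intro hconst
    have hρ₀ := isDensityMatrix_inv_trace_smul (PosSemidef.one (n := Fin dA) (R := ℂ))
      (by simp [hdA.ne'])
    exact ⟨_, hN.isDensityMatrix_map hρ₀,
      N.eq_trace_smul_of_forall_isDensityMatrix fun ρ hρ ↦ hconst ρ _ hρ hρ₀⟩
  · rintro ⟨σ₀, -, hσ₀⟩ ρ ρ' hρ hρ'
    rw [hσ₀, hσ₀, hρ.2, hρ'.2]
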